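/- Let f : ℝⁿ \ {0} → ℝ be smooth and suppose Δf = 0 (harmonic) and there exist constants C > 0 and δ ∈ ℝ with 2 - n < δ < 0 such that |f(x)| ≤ C|x|^δ for all x ≠ 0. Then f = 0. -/

import Mathlib

open Filter Topology

namespace Stmt4Aux

lemma line_hasDerivAt {E : Type*} [NormedAddCommGroup E] [NormedSpace ℝ E]
    (a v : E) (t : ℝ) : HasDerivAt (fun s : ℝ => a + s • v) v t := by
  simpa using ((hasDerivAt_id t).smul_const v).const_add a

lemma second_deriv_nonpos {E : Type*} [NormedAddCommGroup E] [NormedSpace ℝ E]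
    {g : E → ℝ} {a : E} (hg : ContDiffAt ℝ 2 g a) (hmax : IsLocalMax g a) (v : E) :
    fderiv ℝ (fun y => fderiv ℝ g y v) a v ≤ 0 := by
  by_contra hL
  push_neg at hL
  set L := fderiv ℝ (fun y => fderiv ℝ g y v) a v with hLdef
  -- differentiability of the gradient-application map
  have hF : ContDiffAt ℝ 1 (fderiv ℝ g) a := hg.fderiv_right (m := 1) (by norm_num)
  have hFd : DifferentiableAt ℝ (fderiv ℝ g) a := hF.differentiableAt (by norm_num)
  have hFv : DifferentiableAt ℝ (fun y => fderiv ℝ g y v) a :=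
    (ContinuousLinearMap.apply ℝ ℝ v).differentiableAt.comp a hFd
  set ℓ : ℝ → E := fun s => a + s • v with hℓ
  have hℓ0 : ℓ 0 = a := by simp [hℓ]
  set h : ℝ → ℝ := fun t => g (ℓ t) with hh
  set h₁ : ℝ → ℝ := fun t => fderiv ℝ g (ℓ t) v with hh₁
  have hh₁d : HasDerivAt h₁ L 0 := by
    have h0 : HasDerivAt ℓ v 0 := line_hasDerivAt a v 0
    have := HasFDerivAt.comp_hasDerivAt (x := (0:ℝ)) (by rw [hℓ0]; exact hFv.hasFDerivAt) h0
    exact this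
  have hh₁0 : h₁ 0 = 0 := by
    simp [hh₁, hℓ0, hmax.fderiv_eq_zero]
  -- slope of h₁ tends to L > 0
  have hslope : Tendsto (slope h₁ 0) (𝓝[≠] 0) (𝓝 L) :=
    hasDerivAt_iff_tendsto_slope.mp hh₁d
  have hslope_pos : ∀ᶠ s in 𝓝[≠] (0:ℝ), 0 < slope h₁ 0 s :=
    hslope.eventually (eventually_gt_nhds hL)
  -- differentiability of g along the line, near 0
  have hgd : ∀ᶠ y in 𝓝 a, DifferentiableAt ℝ g y :=
    (hg.eventually (by norm_num)).mono (fun y hy => hy.differentiableAt (by norm_num))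
  have hℓc : Continuous ℓ := by continuity
  have hgdl : ∀ᶠ s in 𝓝 (0:ℝ), DifferentiableAt ℝ g (ℓ s) :=
    (hℓc.tendsto 0).eventually (by rwa [hℓ0])
  have hmaxl : ∀ᶠ s in 𝓝 (0:ℝ), h s ≤ h 0 := by
    have := (hℓc.tendsto 0).eventually (by rw [hℓ0]; exact hmax)
    simpa [hh, hℓ0] using this
  obtain ⟨ε₁, hε₁, H₁⟩ := Metric.eventually_nhds_iff.mp (hgdl.and hmaxl)
  have hslope' : ∀ᶠ s in 𝓝 (0:ℝ), s ∈ Set.Ioi (0:ℝ) → 0 < slope h₁ 0 s := by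
    have : 𝓝[>] (0:ℝ) ≤ 𝓝[≠] (0:ℝ) := nhdsWithin_mono _ (fun s hs => ne_of_gt hs)
    exact eventually_nhdsWithin_iff.mp (hslope_pos.filter_mono this)
  obtain ⟨ε₂, hε₂, H₂⟩ := Metric.eventually_nhds_iff.mp hslope'
  set t := min ε₁ ε₂ / 2 with ht
  have ht0 : 0 < t := by positivity
  have htε₁ : t < ε₁ := by
    have := min_le_left ε₁ ε₂; simp only [ht]; linarith
  have htε₂ : t < ε₂ := by
    have := min_le_right ε₁ ε₂; simp only [ht]; linarith
  have hdiff : ∀ s ∈ Set.Icc (0:ℝ) t, DifferentiableAt ℝ g (ℓ s) := by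
    intro s hs
    have : dist s 0 < ε₁ := by
      rw [Real.dist_eq, sub_zero, abs_of_nonneg hs.1]; linarith [hs.2]
    exact (H₁ this).1
  have hderiv : ∀ s ∈ Set.Icc (0:ℝ) t, HasDerivAt h (h₁ s) s := by
    intro s hs
    have := ((hdiff s hs).hasFDerivAt.comp_hasDerivAt s (line_hasDerivAt a v s))
    exact this
  obtain ⟨c, hc, hceq⟩ := exists_hasDerivAt_eq_slope h h₁ ht0
    (fun s hs => ((hderiv s hs).continuousAt).continuousWithinAt)
    (fun s hs => hderiv s ⟨le_of_lt hs.1, le_of_lt hs.2⟩)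
  have hc1 : 0 < h₁ c := by
    have hcd : dist c 0 < ε₂ := by
      rw [Real.dist_eq, sub_zero, abs_of_pos hc.1]; linarith [hc.2]
    have := H₂ hcd hc.1
    have hcne : c - 0 ≠ 0 := by simp [ne_of_gt hc.1]
    rw [slope_def_field] at this
    rw [hh₁0, sub_zero, sub_zero] at this
    have := mul_pos this hc.1
    rwa [div_mul_cancel₀ _ (ne_of_gt hc.1)] at this
  have hht : h t ≤ h 0 := by
    have : dist t 0 < ε₁ := by
      rw [Real.dist_eq, sub_zero, abs_of_pos ht0]; exact htε₁
    exact (H₁ this).2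
  have : h₁ c ≤ 0 := by
    rw [hceq, sub_zero]
    exact div_nonpos_of_nonpos_of_nonneg (by linarith) (le_of_lt ht0)
  linarith

variable {n : ℕ}

noncomputable def W (β : ℝ) (x : EuclideanSpace ℝ (Fin n)) : ℝ :=
  (∑ i, x i ^ 2) ^ (β / 2 : ℝ)

lemma q_eq_norm (x : EuclideanSpace ℝ (Fin n)) : (∑ i, x i ^ 2) = ‖x‖ ^ 2 := by
  rw [EuclideanSpace.norm_eq, Real.sq_sqrt (by positivity)]
  simp [Real.norm_eq_abs, sq_abs]

lemma q_pos {x : EuclideanSpace ℝ (Fin n)} (hx : x ≠ 0) : 0 < ∑ i, x i ^ 2 := by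
  rw [q_eq_norm]
  have : 0 < ‖x‖ := norm_pos_iff.mpr hx
  positivity

lemma W_eq (β : ℝ) (x : EuclideanSpace ℝ (Fin n)) : W β x = ‖x‖ ^ (β : ℝ) := by
  rw [W, q_eq_norm, ← Real.rpow_natCast ‖x‖ 2, ← Real.rpow_mul (norm_nonneg x)]
  norm_num
  congr 1
  ring

lemma contDiff_q : ContDiff ℝ (⊤ : ℕ∞) (fun x : EuclideanSpace ℝ (Fin n) => ∑ i, x i ^ 2) := by
  apply ContDiff.sum
  intro i _
  exact ((EuclideanSpace.proj (𝕜 := ℝ) i).contDiff).pow 2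

lemma contDiffOn_W (β : ℝ) :
    ContDiffOn ℝ (⊤ : ℕ∞) (W β) {(0 : EuclideanSpace ℝ (Fin n))}ᶜ := by
  intro x hx
  apply ContDiffAt.contDiffWithinAt
  exact (Real.contDiffAt_rpow_const_of_ne (q_pos hx).ne').comp x contDiff_q.contDiffAt

lemma hasFDerivAt_q (x : EuclideanSpace ℝ (Fin n)) :
    HasFDerivAt (fun y : EuclideanSpace ℝ (Fin n) => ∑ i, y i ^ 2)
      (∑ i, (2 * x i) • (EuclideanSpace.proj (𝕜 := ℝ) i)) x := by
  apply HasFDerivAt.fun_sum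
  intro i _
  have h1 : HasFDerivAt (fun y : EuclideanSpace ℝ (Fin n) => y i)
      (EuclideanSpace.proj (𝕜 := ℝ) i) x := (EuclideanSpace.proj (𝕜 := ℝ) i).hasFDerivAt
  have h2 : HasDerivAt (fun t : ℝ => t ^ 2) (2 * x i) (x i) := by
    simpa using hasDerivAt_pow 2 (x i)
  exact h2.comp_hasFDerivAt x h1

lemma Dq_apply (x : EuclideanSpace ℝ (Fin n)) (j : Fin n) :
    (∑ i, (2 * x i) • (EuclideanSpace.proj (𝕜 := ℝ) i)) (EuclideanSpace.single j 1)
      = 2 * x j := by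
  simp only [ContinuousLinearMap.sum_apply, ContinuousLinearMap.smul_apply,
    PiLp.proj_apply, EuclideanSpace.single_apply]
  rw [Finset.sum_eq_single j] <;> simp +contextual [eq_comm]

lemma hasFDerivAt_W {β : ℝ} {y : EuclideanSpace ℝ (Fin n)} (hy : y ≠ 0) :
    HasFDerivAt (W β)
      ((β / 2 * (∑ i, y i ^ 2) ^ (β / 2 - 1 : ℝ)) • (∑ i, (2 * y i) • (EuclideanSpace.proj (𝕜 := ℝ) i))) y := by
  exact (Real.hasDerivAt_rpow_const (Or.inl (q_pos hy).ne')).comp_hasFDerivAt y (hasFDerivAt_q y)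

lemma fderiv_W_apply {β : ℝ} {y : EuclideanSpace ℝ (Fin n)} (hy : y ≠ 0) (i : Fin n) :
    fderiv ℝ (W β) y (EuclideanSpace.single i 1)
      = β * ((∑ j, y j ^ 2) ^ (β / 2 - 1 : ℝ) * y i) := by
  rw [(hasFDerivAt_W hy).fderiv]
  simp only [ContinuousLinearMap.smul_apply, Dq_apply, smul_eq_mul]
  ring_nf

lemma laplacian_W {β : ℝ} {x : EuclideanSpace ℝ (Fin n)} (hx : x ≠ 0) :
    ∑ i, fderiv ℝ (fun y => fderiv ℝ (W β) y (EuclideanSpace.single i (1:ℝ))) x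
        (EuclideanSpace.single i (1:ℝ))
      = β * (β + n - 2) * (∑ i, x i ^ 2) ^ (β / 2 - 1 : ℝ) := by
  have hq0 := q_pos hx
  have key : ∀ i : Fin n, fderiv ℝ (fun y => fderiv ℝ (W β) y (EuclideanSpace.single i (1:ℝ))) x
        (EuclideanSpace.single i (1:ℝ))
      = β * ((∑ j, x j ^ 2) ^ (β/2-1:ℝ)
          + x i * ((β/2-1) * (∑ j, x j ^ 2) ^ (β/2-2:ℝ) * (2 * x i))) := by
    intro i
    have hev : (fun y => fderiv ℝ (W β) y (EuclideanSpace.single i (1:ℝ)))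
        =ᶠ[𝓝 x] (fun y => β * ((∑ j, y j ^ 2) ^ (β/2-1:ℝ) * y i)) := by
      filter_upwards [eventually_ne_nhds hx] with y hy
      exact fderiv_W_apply hy i
    rw [hev.fderiv_eq]
    have hA : HasFDerivAt (fun y : EuclideanSpace ℝ (Fin n) => (∑ j, y j ^ 2) ^ (β/2-1:ℝ))
        (((β/2-1) * (∑ j, x j ^ 2) ^ (β/2-2:ℝ)) •
          (∑ j, (2 * x j) • (EuclideanSpace.proj (𝕜 := ℝ) j))) x := by
      have h := (Real.hasDerivAt_rpow_const (x := ∑ j, x j ^ 2) (p := β/2-1)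
        (Or.inl hq0.ne')).comp_hasFDerivAt x (hasFDerivAt_q x)
      have he : (β/2-1-1 : ℝ) = β/2-2 := by ring
      rw [he] at h
      exact h
    have hB : HasFDerivAt (fun y : EuclideanSpace ℝ (Fin n) => y i)
        (EuclideanSpace.proj (𝕜 := ℝ) i) x := (EuclideanSpace.proj (𝕜 := ℝ) i).hasFDerivAt
    have hAB := (hA.mul hB).const_mul β
    rw [HasFDerivAt.fderiv (f := fun y : EuclideanSpace ℝ (Fin n) => β * ((∑ j, y j ^ 2) ^ (β/2-1:ℝ) * y i)) hAB]
    simp only [ContinuousLinearMap.smul_apply, ContinuousLinearMap.add_apply,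
      PiLp.proj_apply, EuclideanSpace.single_apply, Dq_apply, smul_eq_mul]
    simp
  rw [Finset.sum_congr rfl (fun i _ => key i)]
  have h1 : ∀ i : Fin n, β * ((∑ j, x j ^ 2) ^ (β/2-1:ℝ)
        + x i * ((β/2-1) * (∑ j, x j ^ 2) ^ (β/2-2:ℝ) * (2 * x i)))
      = β * (∑ j, x j ^ 2) ^ (β/2-1:ℝ)
        + (2 * β * ((β/2-1) * (∑ j, x j ^ 2) ^ (β/2-2:ℝ))) * x i ^ 2 := by
    intro i; ring
  rw [Finset.sum_congr rfl (fun i _ => h1 i), Finset.sum_add_distrib, Finset.sum_const,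
    ← Finset.mul_sum, Finset.card_univ, Fintype.card_fin, nsmul_eq_mul]
  have hQ : (∑ j, x j ^ 2) ^ (β/2-2:ℝ) * (∑ j, x j ^ 2) = (∑ j, x j ^ 2) ^ (β/2-1:ℝ) := by
    rw [← Real.rpow_add_one hq0.ne']
    congr 1
    ring
  linear_combination (2 * β * (β/2-1)) * hQ

lemma lap_sub {g h : EuclideanSpace ℝ (Fin n) → ℝ} {x : EuclideanSpace ℝ (Fin n)}
    (v : EuclideanSpace ℝ (Fin n)) (c : ℝ)
    (hgx : ContDiffAt ℝ 2 g x) (hhx : ContDiffAt ℝ 2 h x)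
    (hg : ∀ᶠ y in 𝓝 x, DifferentiableAt ℝ g y) (hh : ∀ᶠ y in 𝓝 x, DifferentiableAt ℝ h y) :
    fderiv ℝ (fun y => fderiv ℝ (fun z => g z - c * h z) y v) x v
      = fderiv ℝ (fun y => fderiv ℝ g y v) x v - c * fderiv ℝ (fun y => fderiv ℝ h y v) x v := by
  have hev : (fun y => fderiv ℝ (fun z => g z - c * h z) y v)
      =ᶠ[𝓝 x] (fun y => fderiv ℝ g y v - c * fderiv ℝ h y v) := by
    filter_upwards [hg, hh] with y hgy hhy
    rw [fderiv_fun_sub hgy (hhy.const_mul c), fderiv_const_mul hhy]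
    simp
  rw [hev.fderiv_eq]
  have dgv : DifferentiableAt ℝ (fun y => fderiv ℝ g y v) x :=
    (ContinuousLinearMap.apply ℝ ℝ v).differentiableAt.comp x
      ((hgx.fderiv_right (m := 1) (by norm_num)).differentiableAt (by norm_num))
  have dhv : DifferentiableAt ℝ (fun y => fderiv ℝ h y v) x :=
    (ContinuousLinearMap.apply ℝ ℝ v).differentiableAt.comp x
      ((hhx.fderiv_right (m := 1) (by norm_num)).differentiableAt (by norm_num))
  rw [fderiv_fun_sub dgv (dhv.const_mul c), fderiv_const_mul dhv]
  simp

lemma max_principle {g : EuclideanSpace ℝ (Fin n) → ℝ} {r R : ℝ} (hr : 0 < r)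
    (hg : ∀ x : EuclideanSpace ℝ (Fin n), x ≠ 0 → ContDiffAt ℝ 2 g x)
    (hsub : ∀ x : EuclideanSpace ℝ (Fin n), x ≠ 0 →
      0 < ∑ i, fderiv ℝ (fun y => fderiv ℝ g y (EuclideanSpace.single i (1:ℝ))) x
        (EuclideanSpace.single i (1:ℝ)))
    {x₀ : EuclideanSpace ℝ (Fin n)}
    (hx₀ : x₀ ∈ Metric.closedBall (0 : EuclideanSpace ℝ (Fin n)) R \ Metric.ball 0 r) :
    ∃ a : EuclideanSpace ℝ (Fin n), (‖a‖ = r ∨ ‖a‖ = R) ∧ g x₀ ≤ g a := by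
  set K := Metric.closedBall (0 : EuclideanSpace ℝ (Fin n)) R \ Metric.ball 0 r with hK
  have hmem : ∀ x ∈ K, r ≤ ‖x‖ ∧ ‖x‖ ≤ R := by
    intro x hx
    constructor
    · have := hx.2; rw [Metric.mem_ball, dist_zero_right] at this; linarith [not_lt.mp this]
    · have := hx.1; rwa [Metric.mem_closedBall, dist_zero_right] at this
  have hK0 : ∀ x ∈ K, x ≠ 0 := by
    intro x hx h0
    have := (hmem x hx).1
    rw [h0, norm_zero] at this; linarith
  have hKc : IsCompact K := (isCompact_closedBall _ _).diff Metric.isOpen_ball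
  have hgc : ContinuousOn g K := fun x hx =>
    ((hg x (hK0 x hx)).continuousAt).continuousWithinAt
  obtain ⟨a, haK, hamax⟩ := hKc.exists_isMaxOn ⟨x₀, hx₀⟩ hgc
  have haR := (hmem a haK).2
  have har := (hmem a haK).1
  refine ⟨a, ?_, hamax hx₀⟩
  by_contra hcon
  push_neg at hcon
  have h1 : r < ‖a‖ := lt_of_le_of_ne har (Ne.symm hcon.1)
  have h2 : ‖a‖ < R := lt_of_le_of_ne haR hcon.2
  have hU : K ∈ 𝓝 a := by
    have hUo : IsOpen (Metric.ball (0 : EuclideanSpace ℝ (Fin n)) R \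
        Metric.closedBall 0 r) := Metric.isOpen_ball.sdiff Metric.isClosed_closedBall
    have haU : a ∈ Metric.ball (0 : EuclideanSpace ℝ (Fin n)) R \ Metric.closedBall 0 r := by
      constructor
      · rw [Metric.mem_ball, dist_zero_right]; exact h2
      · rw [Metric.mem_closedBall, dist_zero_right]; push_neg; exact h1
    have hsubset : Metric.ball (0 : EuclideanSpace ℝ (Fin n)) R \ Metric.closedBall 0 r ⊆ K := by
      intro x hx
      exact ⟨Metric.ball_subset_closedBall hx.1, fun hb => hx.2 (Metric.ball_subset_closedBall hb)⟩
    exact Filter.mem_of_superset (hUo.mem_nhds haU) hsubset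
  have hlmax : IsLocalMax g a := hamax.isLocalMax hU
  have hneg : ∑ i, fderiv ℝ (fun y => fderiv ℝ g y (EuclideanSpace.single i (1:ℝ))) a
      (EuclideanSpace.single i (1:ℝ)) ≤ 0 :=
    Finset.sum_nonpos fun i _ => second_deriv_nonpos (hg a (hK0 a haK)) hlmax _
  linarith [hsub a (hK0 a haK)]

lemma one_side (n : ℕ) (hn : 3 ≤ n)
    (f : EuclideanSpace ℝ (Fin n) → ℝ)
    (hf : ContDiffOn ℝ (⊤ : ℕ∞) f {(0 : EuclideanSpace ℝ (Fin n))}ᶜ)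
    (hharm : ∀ x : EuclideanSpace ℝ (Fin n), x ≠ 0 →
      ∑ i : Fin n,
        fderiv ℝ (fun y => fderiv ℝ f y (EuclideanSpace.single i (1 : ℝ))) x
          (EuclideanSpace.single i (1 : ℝ)) = 0)
    (C : ℝ) (hC : 0 < C) (δ : ℝ) (hδ1 : (2 : ℝ) - n < δ) (hδ2 : δ < 0)
    (hbound : ∀ x : EuclideanSpace ℝ (Fin n), x ≠ 0 → |f x| ≤ C * ‖x‖ ^ δ) :
    ∀ x : EuclideanSpace ℝ (Fin n), x ≠ 0 → f x ≤ 0 := by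
  intro x₀ hx₀
  set β : ℝ := ((2 - (n : ℝ)) + δ) / 2 with hβdef
  clear_value β
  have hβ1 : 2 - (n : ℝ) < β := by rw [hβdef]; linarith
  have hβ2 : β < δ := by rw [hβdef]; linarith
  have hβneg : β < 0 := lt_trans hβ2 hδ2
  have hβn : 0 < β + n - 2 := by linarith
  have hx₀n : 0 < ‖x₀‖ := norm_pos_iff.mpr hx₀
  -- smoothness and eventual differentiability facts
  have hfC2 : ∀ x : EuclideanSpace ℝ (Fin n), x ≠ 0 → ContDiffAt ℝ 2 f x := fun x hx =>
    (hf.contDiffAt (isOpen_compl_singleton.mem_nhds hx)).of_le (WithTop.coe_le_coe.mpr le_top)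
  have hWC2 : ∀ x : EuclideanSpace ℝ (Fin n), x ≠ 0 → ContDiffAt ℝ 2 (W β) x := fun x hx =>
    ((contDiffOn_W β).contDiffAt (isOpen_compl_singleton.mem_nhds hx)).of_le (WithTop.coe_le_coe.mpr le_top)
  have hfd : ∀ x : EuclideanSpace ℝ (Fin n), x ≠ 0 →
      ∀ᶠ y in 𝓝 x, DifferentiableAt ℝ f y := by
    intro x hx
    filter_upwards [isOpen_compl_singleton.mem_nhds hx] with y hy
    exact (hfC2 y hy).differentiableAt (by norm_num)
  have hWd : ∀ x : EuclideanSpace ℝ (Fin n), x ≠ 0 →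
      ∀ᶠ y in 𝓝 x, DifferentiableAt ℝ (W β) y := by
    intro x hx
    filter_upwards [isOpen_compl_singleton.mem_nhds hx] with y hy
    exact (hWC2 y hy).differentiableAt (by norm_num)
  -- main estimate
  have key : ∀ s : ℝ, 0 < s → f x₀ ≤ s := by
    intro s hs
    have hxb : 0 < ‖x₀‖ ^ β := Real.rpow_pos_of_pos hx₀n β
    set ε : ℝ := s / (2 * ‖x₀‖ ^ β) with hεdef
    have hε : 0 < ε := by rw [hεdef]; positivity
    clear_value ε
    have hεx : ε * ‖x₀‖ ^ β = s / 2 := by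
      rw [hεdef]; field_simp
    -- choose R
    have hRlim : Tendsto (fun R : ℝ => C * R ^ δ) atTop (𝓝 0) := by
      have h1 : Tendsto (fun R : ℝ => R ^ δ) atTop (𝓝 0) := by
        have := tendsto_rpow_neg_atTop (y := -δ) (by linarith)
        simpa using this
      simpa using h1.const_mul C
    obtain ⟨R, hR1, hR2⟩ : ∃ R : ℝ, ‖x₀‖ < R ∧ C * R ^ δ ≤ s / 2 :=
      ((eventually_gt_atTop ‖x₀‖).and
        (hRlim.eventually (eventually_le_nhds (by linarith : (0:ℝ) < s / 2)))).exists
    have hR0 : 0 < R := lt_trans hx₀n hR1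
    -- choose r
    have hrlim : Tendsto (fun r : ℝ => C * r ^ (δ - β)) (𝓝[>] (0:ℝ)) (𝓝 0) := by
      have h1 : Tendsto (fun r : ℝ => r ^ (δ - β)) (𝓝 (0:ℝ)) (𝓝 ((0:ℝ) ^ (δ - β))) :=
        (Real.continuousAt_rpow_const 0 (δ - β) (Or.inr (by linarith))).tendsto
      rw [Real.zero_rpow (ne_of_gt (by linarith) : δ - β ≠ 0)] at h1
      have h2 : Tendsto (fun r : ℝ => C * r ^ (δ - β)) (𝓝[>] (0:ℝ)) (𝓝 (C * 0)) :=
        (h1.const_mul C).mono_left nhdsWithin_le_nhds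
      simpa using h2
    obtain ⟨r, hr1, hr2, hr0⟩ : ∃ r : ℝ, C * r ^ (δ - β) ≤ ε ∧ r < ‖x₀‖ ∧ 0 < r := by
      have h1 : ∀ᶠ r in 𝓝[>] (0:ℝ), C * r ^ (δ - β) ≤ ε :=
        hrlim.eventually (eventually_le_nhds hε)
      have h2 : ∀ᶠ r in 𝓝[>] (0:ℝ), r < ‖x₀‖ :=
        (eventually_lt_nhds hx₀n).filter_mono nhdsWithin_le_nhds
      have h3 : ∀ᶠ r in 𝓝[>] (0:ℝ), 0 < r := eventually_mem_nhdsWithin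
      exact (h1.and (h2.and h3)).exists.imp fun r hr => ⟨hr.1, hr.2.1, hr.2.2⟩
    -- the comparison function
    set g : EuclideanSpace ℝ (Fin n) → ℝ := fun y => f y - ε * W β y with hgdef
    clear_value g
    have hgC2 : ∀ x : EuclideanSpace ℝ (Fin n), x ≠ 0 → ContDiffAt ℝ 2 g x := fun x hx => by
      rw [hgdef]
      exact (hfC2 x hx).sub (contDiffAt_const.mul (hWC2 x hx))
    have hsub : ∀ x : EuclideanSpace ℝ (Fin n), x ≠ 0 →
        0 < ∑ i, fderiv ℝ (fun y => fderiv ℝ g y (EuclideanSpace.single i (1:ℝ))) x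
          (EuclideanSpace.single i (1:ℝ)) := by
      intro x hx
      have hterm : ∀ i : Fin n,
          fderiv ℝ (fun y => fderiv ℝ g y (EuclideanSpace.single i (1:ℝ))) x
            (EuclideanSpace.single i (1:ℝ))
          = fderiv ℝ (fun y => fderiv ℝ f y (EuclideanSpace.single i (1:ℝ))) x
              (EuclideanSpace.single i (1:ℝ))
            - ε * fderiv ℝ (fun y => fderiv ℝ (W β) y (EuclideanSpace.single i (1:ℝ))) x
              (EuclideanSpace.single i (1:ℝ)) := fun i => by
        rw [hgdef]
        exact lap_sub _ ε (hfC2 x hx) (hWC2 x hx) (hfd x hx) (hWd x hx)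
      rw [Finset.sum_congr rfl fun i _ => hterm i, Finset.sum_sub_distrib, ← Finset.mul_sum,
        hharm x hx, laplacian_W hx]
      have hq1 : 0 < (∑ i, x i ^ 2) ^ (β / 2 - 1 : ℝ) := Real.rpow_pos_of_pos (q_pos hx) _
      have hneg : β * (β + (n : ℝ) - 2) < 0 := mul_neg_of_neg_of_pos hβneg hβn
      have : ε * (β * (β + (n : ℝ) - 2) * (∑ i, x i ^ 2) ^ (β / 2 - 1 : ℝ)) < 0 := by
        apply mul_neg_of_pos_of_neg hε
        exact mul_neg_of_neg_of_pos hneg hq1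
      linarith
    -- apply the maximum principle
    have hx₀K : x₀ ∈ Metric.closedBall (0 : EuclideanSpace ℝ (Fin n)) R \ Metric.ball 0 r := by
      constructor
      · rw [Metric.mem_closedBall, dist_zero_right]; linarith
      · rw [Metric.mem_ball, dist_zero_right]; push_neg; linarith
    obtain ⟨a, hao, hle⟩ := max_principle hr0 hgC2 hsub hx₀K
    have ha0 : a ≠ 0 := by
      intro h0
      rcases hao with h | h <;> rw [h0, norm_zero] at h <;> linarith
    have hfa : f a ≤ C * ‖a‖ ^ δ := le_trans (le_abs_self _) (hbound a ha0)
    have hga : g a ≤ s / 2 := by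
      rcases hao with h | h
      · -- inner sphere
        have h1 : g a ≤ C * r ^ δ - ε * r ^ β := by
          rw [h] at hfa
          have : g a = f a - ε * r ^ β := by rw [hgdef]; simp only [W_eq, h]
          linarith
        have h2 : C * r ^ δ ≤ ε * r ^ β := by
          have h3 : r ^ δ = r ^ (δ - β) * r ^ β := by
            rw [← Real.rpow_add hr0]; ring_nf
          rw [h3, ← mul_assoc]
          exact mul_le_mul_of_nonneg_right hr1 (Real.rpow_nonneg (le_of_lt hr0) β)
        linarith
      · -- outer sphere
        have h1 : g a ≤ C * R ^ δ - ε * R ^ β := by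
          rw [h] at hfa
          have : g a = f a - ε * R ^ β := by rw [hgdef]; simp only [W_eq, h]
          linarith
        have h2 : 0 ≤ ε * R ^ β := by positivity
        linarith
    have hgx₀ : f x₀ = g x₀ + ε * ‖x₀‖ ^ β := by
      rw [hgdef]; simp only [W_eq]; ring
    rw [hgx₀, hεx]
    linarith
  by_contra hpos
  push_neg at hpos
  have := key (f x₀ / 2) (by linarith)
  linarith

end Stmt4Aux

open Stmt4Aux in
/-- A smooth harmonic function on `ℝⁿ \ {0}` (n ≥ 3) satisfying
`|f(x)| ≤ C|x|^δ` for some `2 - n < δ < 0` is identically zero. -/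
theorem stmt4 (n : ℕ) (hn : 3 ≤ n)
    (f : EuclideanSpace ℝ (Fin n) → ℝ)
    (hf : ContDiffOn ℝ (⊤ : ℕ∞) f {(0 : EuclideanSpace ℝ (Fin n))}ᶜ)
    (hharm : ∀ x : EuclideanSpace ℝ (Fin n), x ≠ 0 →
      ∑ i : Fin n,
        fderiv ℝ (fun y => fderiv ℝ f y (EuclideanSpace.single i (1 : ℝ))) x
          (EuclideanSpace.single i (1 : ℝ)) = 0)
    (C : ℝ) (hC : 0 < C) (δ : ℝ) (hδ1 : (2 : ℝ) - n < δ) (hδ2 : δ < 0)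
    (hbound : ∀ x : EuclideanSpace ℝ (Fin n), x ≠ 0 → |f x| ≤ C * ‖x‖ ^ δ) :
    ∀ x : EuclideanSpace ℝ (Fin n), x ≠ 0 → f x = 0 := by
  intro x hx
  have h1 : f x ≤ 0 := one_side n hn f hf hharm C hC δ hδ1 hδ2 hbound x hx
  -- apply the one-sided bound to -f
  have hharm' : ∀ x : EuclideanSpace ℝ (Fin n), x ≠ 0 →
      ∑ i : Fin n,
        fderiv ℝ (fun y => fderiv ℝ (fun z => -f z) y (EuclideanSpace.single i (1 : ℝ))) x
          (EuclideanSpace.single i (1 : ℝ)) = 0 := by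
    intro x hx
    have hterm : ∀ i : Fin n,
        fderiv ℝ (fun y => fderiv ℝ (fun z => -f z) y (EuclideanSpace.single i (1 : ℝ))) x
          (EuclideanSpace.single i (1 : ℝ))
        = -(fderiv ℝ (fun y => fderiv ℝ f y (EuclideanSpace.single i (1 : ℝ))) x
          (EuclideanSpace.single i (1 : ℝ))) := by
      intro i
      have h1 : (fun y => fderiv ℝ (fun z => -f z) y (EuclideanSpace.single i (1 : ℝ)))
          = (fun y => -(fderiv ℝ f y (EuclideanSpace.single i (1 : ℝ)))) := by
        funext y
        rw [fderiv_fun_neg]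
        simp
      rw [h1, fderiv_fun_neg]
      simp
    rw [Finset.sum_congr rfl fun i _ => hterm i, Finset.sum_neg_distrib, hharm x hx, neg_zero]
  have h2 : -f x ≤ 0 := by
    have := one_side n hn (fun z => -f z) hf.neg hharm' C hC δ hδ1 hδ2
      (fun y hy => by simpa [abs_neg] using hbound y hy) x hx
    simpa using this
  linarith
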